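/- arXiv:2205.14485 — 5 statements merged into one kernel-verified Lean document; each statement's English description precedes it below -/
import Mathlib

section
/- Let f: 𝒳^n → ℝ^k have L₂-sensitivity at most Δ₂ > 0, let σ > 0 and ε ≥ 0, and suppose δ ≥ Φ(Δ₂/(2σ) − εσ/Δ₂) − e^ε Φ(−Δ₂/(2σ) − εσ/Δ₂), where Φ is the cumulative distribution function of the standard Gaussian distribution. Then the Gaussian mechanism M(X) = f(X) + N(0, σ²I_k) is (ε, δ)-differentially private: for all neighbouring datasets X, X' ∈ 𝒳^n and all measurable S ⊆ ℝ^k, P(M(X) ∈ S) ≤ e^ε P(M(X') ∈ S) + δ. -/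
/-!
Write `μ = N(a, σ²I)` and `ν = N(b, σ²I)`. Then `μ` has density `exp L` with respect to `ν` for
the affine privacy loss `L`, and `L` is Gaussian under both measures: `N(ρ²/2, ρ²)` under `μ` and
`N(-ρ²/2, ρ²)` under `ν`, where `ρ = ‖a - b‖ / σ`. Splitting an event along the half-space
`{ε < L}`, on which the density exceeds `e^ε`, gives
`μ S ≤ e^ε ν S + (μ {ε < L} - e^ε ν {ε < L})`, and the last term equals
`Φ(ρ/2 - ε/ρ) - e^ε Φ(-ρ/2 - ε/ρ)`. Its derivative in `ρ` is the standard Gaussian density at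
`ρ/2 - ε/ρ`, so it increases with `ρ` and is at most its value at `Δ / σ`.
-/

open MeasureTheory ProbabilityTheory
open scoped BigOperators ENNReal

/-- The cumulative distribution function `Φ` of the standard Gaussian distribution. -/
noncomputable def stdGaussianCDF (z : ℝ) : ℝ := (gaussianReal 0 1 (Set.Iic z)).toReal

open Real
open scoped NNReal

theorem MeasureTheory.Measure.pi_eq_withDensity {ι α : Type*} [Fintype ι] [MeasurableSpace α]
    {μ ν : ι → Measure α} [∀ i, IsProbabilityMeasure (μ i)] [∀ i, SigmaFinite (ν i)]
    {f : ι → α → ℝ≥0∞} (hf : ∀ i, Measurable (f i)) (hν : ∀ i, ν i = (μ i).withDensity (f i)) :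
    Measure.pi ν = (Measure.pi μ).withDensity (fun x ↦ ∏ i, f i (x i)) := by
  refine Measure.pi_eq fun s hs ↦ ?_
  have hindicator : (Set.univ.pi s).indicator (fun x ↦ ∏ i, f i (x i))
      = fun x ↦ ∏ i, (s i).indicator (f i) (x i) := by
    ext x
    classical
    simp only [Set.indicator_apply, Set.mem_univ_pi, Finset.prod_ite_zero, Finset.mem_univ,
      forall_const]
  rw [withDensity_apply _ (.univ_pi hs), ← lintegral_indicator (.univ_pi hs), hindicator,
    lintegral_prod_eq_prod_lintegral_of_indepFun _ _
      (iIndepFun_pi fun i ↦ ((hf i).indicator (hs i)).aemeasurable)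
      fun i ↦ ((hf i).indicator (hs i)).comp (measurable_pi_apply i)]
  refine Finset.prod_congr rfl fun i _ ↦ ?_
  rw [(measurePreserving_eval μ i).lintegral_comp ((hf i).indicator (hs i)),
    lintegral_indicator (hs i), hν i, withDensity_apply _ (hs i)]

theorem MeasureTheory.Measure.withDensity_apply_le_mul_add {α : Type*} [MeasurableSpace α]
    (ν : Measure α) {ρ : α → ℝ≥0∞} (hρ : Measurable ρ) {c δ : ℝ≥0∞}
    (hc : c * ν {x | c < ρ x} ≠ ∞)
    (hδ : ν.withDensity ρ {x | c < ρ x} ≤ c * ν {x | c < ρ x} + δ)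
    {S : Set α} (hS : MeasurableSet S) :
    ν.withDensity ρ S ≤ c * ν S + δ := by
  set A := {x | c < ρ x}
  have hA : MeasurableSet A := measurableSet_lt measurable_const hρ
  have hSA : ν.withDensity ρ (S \ A) ≤ c * ν (S \ A) := by
    rw [withDensity_apply _ (hS.diff hA), ← setLIntegral_const]
    exact setLIntegral_mono measurable_const fun x hx ↦ not_lt.mp hx.2
  have hAS : c * ν (A \ S) ≤ ν.withDensity ρ (A \ S) := by
    rw [withDensity_apply _ (hA.diff hS), ← setLIntegral_const]
    exact setLIntegral_mono hρ fun x hx ↦ hx.1.le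
  refine ENNReal.le_of_add_le_add_right hc ?_
  calc ν.withDensity ρ S + c * ν A
      = (ν.withDensity ρ (S ∩ A) + ν.withDensity ρ (S \ A)) + c * (ν (A ∩ S) + ν (A \ S)) := by
        rw [measure_inter_add_sdiff _ hA, measure_inter_add_sdiff _ hS]
    _ ≤ (ν.withDensity ρ (A ∩ S) + c * ν (S \ A)) + (c * ν (S ∩ A) + ν.withDensity ρ (A \ S)) := by
        rw [Set.inter_comm S A, mul_add]
        gcongr
    _ = c * (ν (S ∩ A) + ν (S \ A)) + (ν.withDensity ρ (A ∩ S) + ν.withDensity ρ (A \ S)) := by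
        ring
    _ = c * ν S + ν.withDensity ρ A := by
        rw [measure_inter_add_sdiff _ hA, measure_inter_add_sdiff _ hS]
    _ ≤ c * ν S + (c * ν A + δ) := by gcongr
    _ = c * ν S + δ + c * ν A := by ring

theorem gaussianPDFReal_eq_exp_mul_gaussianPDFReal (a b : ℝ) (v : ℝ≥0) (x : ℝ) :
    gaussianPDFReal a v x
      = exp (((a - b) * x - (a ^ 2 - b ^ 2) / 2) / v) * gaussianPDFReal b v x := by
  simp only [gaussianPDFReal]
  rw [mul_left_comm, ← exp_add]
  congr 2
  ring

theorem gaussianReal_eq_withDensity_gaussianReal (a b : ℝ) {v : ℝ≥0} (hv : v ≠ 0) :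
    gaussianReal a v = (gaussianReal b v).withDensity
      fun x ↦ ENNReal.ofReal (exp (((a - b) * x - (a ^ 2 - b ^ 2) / 2) / v)) := by
  rw [gaussianReal_of_var_ne_zero _ hv, gaussianReal_of_var_ne_zero _ hv,
    ← withDensity_mul _ (measurable_gaussianPDF _ _) (by fun_prop)]
  congr 1
  ext x
  rw [Pi.mul_apply, gaussianPDF, gaussianPDF, ← ENNReal.ofReal_mul (gaussianPDFReal_nonneg _ _ _),
    mul_comm, gaussianPDFReal_eq_exp_mul_gaussianPDFReal a b]

theorem gaussianReal_Ioi_eq_ofReal_stdGaussianCDF {m : ℝ} {v : ℝ≥0} (hv : v ≠ 0) (t : ℝ) :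
    gaussianReal m v (Set.Ioi t) = ENNReal.ofReal (stdGaussianCDF ((m - t) / √v)) := by
  have hsqrt : 0 < √(v : ℝ) := by positivity
  have hstd : ((gaussianReal m v).map (m - ·)).map (· / √v) = gaussianReal 0 1 := by
    rw [gaussianReal_map_const_sub, gaussianReal_map_div_const, sub_self, zero_div]
    congr
    ext
    simp [sq_sqrt v.coe_nonneg, hv]
  have hpre : (fun x ↦ (m - x) / √v) ⁻¹' Set.Iio ((m - t) / √v) = Set.Ioi t := by
    ext x
    simp [div_lt_div_iff_of_pos_right hsqrt]
  have := nullSingletonClass_gaussianReal (μ := (0 : ℝ)) one_ne_zero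
  rw [stdGaussianCDF, ENNReal.ofReal_toReal (measure_ne_top _ _), ← measure_congr Iio_ae_eq_Iic,
    ← hstd, Measure.map_map (by fun_prop) (by fun_prop),
    Measure.map_apply (by fun_prop) measurableSet_Iio]
  exact congrArg _ hpre.symm

theorem continuous_gaussianPDFReal (m : ℝ) (v : ℝ≥0) : Continuous (gaussianPDFReal m v) := by
  unfold gaussianPDFReal
  fun_prop

theorem stdGaussianCDF_eq_add_intervalIntegral (z : ℝ) :
    stdGaussianCDF z = stdGaussianCDF 0 + ∫ x in (0 : ℝ)..z, gaussianPDFReal 0 1 x := by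
  have hint (y : ℝ) : IntegrableOn (gaussianPDFReal 0 1) (Set.Iic y) :=
    (integrable_gaussianPDFReal 0 1).integrableOn
  have hcdf (y : ℝ) : stdGaussianCDF y = ∫ x in Set.Iic y, gaussianPDFReal 0 1 x := by
    rw [stdGaussianCDF, gaussianReal_apply_eq_integral _ one_ne_zero, ENNReal.toReal_ofReal
      (setIntegral_nonneg measurableSet_Iic fun x _ ↦ gaussianPDFReal_nonneg _ _ _)]
  rw [hcdf, hcdf, ← intervalIntegral.integral_Iic_sub_Iic (hint 0) (hint z), add_sub_cancel]

theorem hasDerivAt_stdGaussianCDF (z : ℝ) :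
    HasDerivAt stdGaussianCDF (gaussianPDFReal 0 1 z) z := by
  rw [funext stdGaussianCDF_eq_add_intervalIntegral]
  exact ((continuous_gaussianPDFReal 0 1).integral_hasStrictDerivAt 0 z).hasDerivAt.const_add _

noncomputable def gaussianPrivacyProfile (ε ρ : ℝ) : ℝ :=
  stdGaussianCDF (ρ / 2 - ε / ρ) - exp ε * stdGaussianCDF (-ρ / 2 - ε / ρ)

theorem exp_mul_gaussianPDFReal_neg_div_two_sub_div (ε : ℝ) {ρ : ℝ} (hρ : ρ ≠ 0) :
    exp ε * gaussianPDFReal 0 1 (-ρ / 2 - ε / ρ) = gaussianPDFReal 0 1 (ρ / 2 - ε / ρ) := by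
  simp only [gaussianPDFReal, NNReal.coe_one, mul_one]
  rw [mul_left_comm, ← exp_add]
  congr 2
  field_simp
  ring

theorem hasDerivAt_gaussianPrivacyProfile (ε : ℝ) {ρ : ℝ} (hρ : ρ ≠ 0) :
    HasDerivAt (gaussianPrivacyProfile ε) (gaussianPDFReal 0 1 (ρ / 2 - ε / ρ)) ρ := by
  have hinv : HasDerivAt (fun ρ ↦ ε / ρ) (-(ε / ρ ^ 2)) ρ := by
    simpa [div_eq_mul_inv] using (hasDerivAt_inv hρ).const_mul ε
  have hu := (hasDerivAt_stdGaussianCDF _).comp ρ (((hasDerivAt_id ρ).div_const 2).sub hinv)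
  have hw := ((hasDerivAt_stdGaussianCDF _).comp ρ
    (((hasDerivAt_id ρ).neg.div_const 2).sub hinv)).const_mul (exp ε)
  refine (hu.sub hw).congr_deriv ?_
  simp only [Pi.sub_apply, Pi.neg_apply, id]
  linear_combination (1 / 2 - ε / ρ ^ 2) * exp_mul_gaussianPDFReal_neg_div_two_sub_div ε hρ

theorem monotoneOn_gaussianPrivacyProfile (ε : ℝ) :
    MonotoneOn (gaussianPrivacyProfile ε) (Set.Ioi 0) := by
  have hderiv (ρ : ℝ) (hρ : ρ ∈ Set.Ioi 0) := hasDerivAt_gaussianPrivacyProfile ε (ne_of_gt hρ)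
  refine (strictMonoOn_of_deriv_pos (convex_Ioi 0)
    (fun ρ hρ ↦ (hderiv ρ hρ).continuousAt.continuousWithinAt) fun ρ hρ ↦ ?_).monotoneOn
  rw [interior_Ioi] at hρ
  rw [(hderiv ρ hρ).deriv]
  exact gaussianPDFReal_pos _ _ _ one_ne_zero

section

variable {ι : Type*} [Fintype ι]

theorem pi_gaussianReal_map_sum_mul (a c : ι → ℝ) (v : ι → ℝ≥0) :
    (Measure.pi fun i ↦ gaussianReal (a i) (v i)).map (fun x ↦ ∑ i, c i * x i)
      = gaussianReal (∑ i, c i * a i) (∑ i, c i ^ 2 * v i).toNNReal := by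
  refine Measure.ext_of_charFun (funext fun t ↦ ?_)
  have hmeas : Measurable fun x : ι → ℝ ↦ ∑ i, c i * x i := by fun_prop
  rw [charFun_apply_real, integral_map hmeas.aemeasurable (by fun_prop), charFun_gaussianReal,
    Real.coe_toNNReal _ (by positivity)]
  calc ∫ x, Complex.exp (t * ↑(∑ i, c i * x i) * Complex.I)
        ∂Measure.pi (fun i ↦ gaussianReal (a i) (v i))
      = ∫ x, ∏ i, Complex.exp ((t * c i : ℝ) * x i * Complex.I)
          ∂Measure.pi (fun i ↦ gaussianReal (a i) (v i)) := by
        simp_rw [← Complex.exp_sum]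
        push_cast
        simp_rw [Finset.mul_sum, Finset.sum_mul, mul_assoc]
    _ = ∏ i, charFun (gaussianReal (a i) (v i)) (t * c i) := by
        rw [integral_fintype_prod_eq_prod
          fun i (y : ℝ) ↦ Complex.exp ((t * c i : ℝ) * y * Complex.I)]
        simp_rw [charFun_apply_real]
    _ = _ := by
        simp_rw [charFun_gaussianReal, ← Complex.exp_sum]
        push_cast
        congr 1
        simp only [Finset.sum_sub_distrib, Finset.mul_sum, Finset.sum_mul, Finset.sum_div]
        congr 1 <;> exact Finset.sum_congr rfl fun i _ ↦ by ring

noncomputable def gaussianPrivacyLoss (v : ℝ≥0) (a b x : ι → ℝ) : ℝ :=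
  ∑ i, ((a i - b i) * x i - (a i ^ 2 - b i ^ 2) / 2) / v

@[fun_prop]
theorem measurable_gaussianPrivacyLoss (v : ℝ≥0) (a b : ι → ℝ) :
    Measurable (gaussianPrivacyLoss v a b) := by
  unfold gaussianPrivacyLoss
  fun_prop

theorem pi_gaussianReal_map_gaussianPrivacyLoss {v : ℝ≥0} (hv : v ≠ 0) (a b m : ι → ℝ) :
    (Measure.pi fun i ↦ gaussianReal (m i) v).map (gaussianPrivacyLoss v a b)
      = gaussianReal (gaussianPrivacyLoss v a b m) (∑ i, (a i - b i) ^ 2 / v).toNNReal := by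
  have hL : gaussianPrivacyLoss v a b
      = (· + -∑ i, (a i ^ 2 - b i ^ 2) / 2 / v) ∘ fun x ↦ ∑ i, (a i - b i) / v * x i := by
    ext x
    simp only [gaussianPrivacyLoss, Function.comp_apply, ← Finset.sum_neg_distrib,
      ← Finset.sum_add_distrib]
    exact Finset.sum_congr rfl fun i _ ↦ by ring
  rw [hL, ← Measure.map_map (by fun_prop) (by fun_prop), pi_gaussianReal_map_sum_mul,
    gaussianReal_map_add_const]
  congr 2
  exact Finset.sum_congr rfl fun i _ ↦ by field_simp

theorem gaussianPrivacyLoss_apply_left (v : ℝ≥0) (a b : ι → ℝ) :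
    gaussianPrivacyLoss v a b a = (∑ i, (a i - b i) ^ 2 / v) / 2 := by
  rw [gaussianPrivacyLoss, Finset.sum_div]
  exact Finset.sum_congr rfl fun i _ ↦ by ring

theorem gaussianPrivacyLoss_apply_right (v : ℝ≥0) (a b : ι → ℝ) :
    gaussianPrivacyLoss v a b b = -(∑ i, (a i - b i) ^ 2 / v) / 2 := by
  rw [gaussianPrivacyLoss, ← Finset.sum_neg_distrib, Finset.sum_div]
  exact Finset.sum_congr rfl fun i _ ↦ by ring

theorem pi_gaussianReal_eq_withDensity_exp_gaussianPrivacyLoss (a b : ι → ℝ) {v : ℝ≥0}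
    (hv : v ≠ 0) :
    Measure.pi (fun i ↦ gaussianReal (a i) v)
      = (Measure.pi fun i ↦ gaussianReal (b i) v).withDensity
          fun x ↦ ENNReal.ofReal (exp (gaussianPrivacyLoss v a b x)) := by
  rw [Measure.pi_eq_withDensity (fun i ↦ by fun_prop)
    fun i ↦ gaussianReal_eq_withDensity_gaussianReal (a i) (b i) hv]
  congr 1
  ext x
  rw [gaussianPrivacyLoss, exp_sum, ENNReal.ofReal_prod_of_nonneg fun i _ ↦ (exp_pos _).le]

theorem sum_sq_sub_div_pos {v : ℝ≥0} (hv : v ≠ 0) {a b : ι → ℝ} (hab : a ≠ b) :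
    0 < ∑ i, (a i - b i) ^ 2 / v := by
  obtain ⟨j, hj⟩ := Function.ne_iff.mp hab
  exact Finset.sum_pos' (fun i _ ↦ by positivity)
    ⟨j, Finset.mem_univ j, div_pos (sq_pos_of_ne_zero (sub_ne_zero.mpr hj)) (by positivity)⟩

theorem pi_gaussianReal_gaussianPrivacyLoss_gt {v : ℝ≥0} (hv : v ≠ 0) {a b : ι → ℝ} (hab : a ≠ b)
    (m : ι → ℝ) (ε : ℝ) :
    Measure.pi (fun i ↦ gaussianReal (m i) v) {x | ε < gaussianPrivacyLoss v a b x}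
      = ENNReal.ofReal (stdGaussianCDF
          ((gaussianPrivacyLoss v a b m - ε) / √(∑ i, (a i - b i) ^ 2 / v))) := by
  have hpos := sum_sq_sub_div_pos hv hab
  change Measure.pi _ (gaussianPrivacyLoss v a b ⁻¹' Set.Ioi ε) = _
  rw [← Measure.map_apply (by fun_prop) measurableSet_Ioi,
    pi_gaussianReal_map_gaussianPrivacyLoss hv, gaussianReal_Ioi_eq_ofReal_stdGaussianCDF
      (by simpa using hpos), Real.coe_toNNReal _ hpos.le]

theorem pi_gaussianReal_gaussianPrivacyLoss_gt_le {v : ℝ≥0} (hv : v ≠ 0) {a b : ι → ℝ}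
    (hab : a ≠ b) (ε : ℝ) :
    Measure.pi (fun i ↦ gaussianReal (a i) v) {x | ε < gaussianPrivacyLoss v a b x}
      ≤ ENNReal.ofReal (exp ε)
          * Measure.pi (fun i ↦ gaussianReal (b i) v) {x | ε < gaussianPrivacyLoss v a b x}
        + ENNReal.ofReal (gaussianPrivacyProfile ε √(∑ i, (a i - b i) ^ 2 / v)) := by
  rw [pi_gaussianReal_gaussianPrivacyLoss_gt hv hab, pi_gaussianReal_gaussianPrivacyLoss_gt hv hab,
    gaussianPrivacyLoss_apply_left, gaussianPrivacyLoss_apply_right,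
    ← ENNReal.ofReal_mul (exp_pos ε).le]
  set ρ := √(∑ i, (a i - b i) ^ 2 / v)
  have hρ : 0 < ρ := sqrt_pos.mpr (sum_sq_sub_div_pos hv hab)
  have hsq : ∑ i, (a i - b i) ^ 2 / v = ρ ^ 2 := (sq_sqrt (by positivity)).symm
  rw [hsq]
  calc ENNReal.ofReal (stdGaussianCDF ((ρ ^ 2 / 2 - ε) / ρ))
      = ENNReal.ofReal (exp ε * stdGaussianCDF ((-ρ ^ 2 / 2 - ε) / ρ)
          + gaussianPrivacyProfile ε ρ) := by
        rw [gaussianPrivacyProfile]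
        congr 1
        field_simp
        ring
    _ ≤ _ := ENNReal.ofReal_add_le

theorem pi_gaussianReal_le_exp_mul_add (a b : EuclideanSpace ℝ ι)
    {σ Δ ε δ : ℝ} (hσ : 0 < σ) (hε : 0 ≤ ε) (hab : ‖a - b‖ ≤ Δ)
    (hδ : gaussianPrivacyProfile ε (Δ / σ) ≤ δ) {S : Set (ι → ℝ)} (hS : MeasurableSet S) :
    Measure.pi (fun i ↦ gaussianReal (a i) (σ ^ 2).toNNReal) S
      ≤ ENNReal.ofReal (exp ε) * Measure.pi (fun i ↦ gaussianReal (b i) (σ ^ 2).toNNReal) S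
        + ENNReal.ofReal δ := by
  have hv : (σ ^ 2).toNNReal ≠ 0 := by simp [hσ.ne']
  have hlevel : {x | ENNReal.ofReal (exp ε)
        < ENNReal.ofReal (exp (gaussianPrivacyLoss (σ ^ 2).toNNReal a b x))}
      = {x | ε < gaussianPrivacyLoss (σ ^ 2).toNNReal a b x} := by
    ext x
    simp [ENNReal.ofReal_lt_ofReal_iff (exp_pos _)]
  rw [pi_gaussianReal_eq_withDensity_exp_gaussianPrivacyLoss a b hv]
  refine Measure.withDensity_apply_le_mul_add _ (by fun_prop)
    (ENNReal.mul_ne_top ENNReal.ofReal_ne_top (measure_ne_top _ _)) ?_ hS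
  rw [hlevel, ← pi_gaussianReal_eq_withDensity_exp_gaussianPrivacyLoss a b hv]
  obtain rfl | hab' := eq_or_ne a b
  · have hempty : {x | ε < gaussianPrivacyLoss (σ ^ 2).toNNReal a a x} = ∅ := by
      simp [gaussianPrivacyLoss, not_lt.mpr hε]
    simp [hempty]
  · have hsqrt : √(∑ i, (a i - b i) ^ 2 / (σ ^ 2).toNNReal) = ‖a - b‖ / σ := by
      rw [← Finset.sum_div, Real.coe_toNNReal _ (sq_nonneg σ), sqrt_div' _ (sq_nonneg σ),
        sqrt_sq hσ.le, EuclideanSpace.norm_eq]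
      simp [Real.norm_eq_abs, sq_abs]
    have hρpos : 0 < ‖a - b‖ / σ := div_pos (norm_sub_pos_iff.mpr hab') hσ
    have hρle : ‖a - b‖ / σ ≤ Δ / σ := div_le_div_of_nonneg_right hab hσ.le
    refine (pi_gaussianReal_gaussianPrivacyLoss_gt_le hv
      ((WithLp.ofLp_injective 2).ne hab') ε).trans ?_
    rw [hsqrt]
    gcongr
    exact (monotoneOn_gaussianPrivacyProfile ε hρpos (hρpos.trans_le hρle) hρle).trans hδ

end

theorem gaussian_mechanism_is_DP_general
    {𝒳 : Type*} {n k : ℕ}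
    (f : (Fin n → 𝒳) → EuclideanSpace ℝ (Fin k))
    (Δ σ ε δ : ℝ) (hσ : 0 < σ) (hε : 0 ≤ ε)
    (hsens : ∀ X X' : Fin n → 𝒳, (∃ i₀ : Fin n, ∀ i : Fin n, i ≠ i₀ → X i = X' i) →
      ‖f X - f X'‖ ≤ Δ)
    (hδ : stdGaussianCDF (Δ / (2 * σ) - ε * σ / Δ)
        - Real.exp ε * stdGaussianCDF (-Δ / (2 * σ) - ε * σ / Δ) ≤ δ)
    (X X' : Fin n → 𝒳) (hneighbour : ∃ i₀ : Fin n, ∀ i : Fin n, i ≠ i₀ → X i = X' i)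
    (S : Set (Fin k → ℝ)) (hS : MeasurableSet S) :
    (Measure.pi fun i : Fin k => gaussianReal (f X i) (Real.toNNReal (σ ^ 2))) S
      ≤ ENNReal.ofReal (Real.exp ε)
          * (Measure.pi fun i : Fin k => gaussianReal (f X' i) (Real.toNNReal (σ ^ 2))) S
        + ENNReal.ofReal δ := by
  refine pi_gaussianReal_le_exp_mul_add (f X) (f X') hσ hε (hsens X X' hneighbour) ?_ hS
  rw [gaussianPrivacyProfile, div_div_eq_mul_div]
  convert hδ using 4 <;> ring

/-- The Gaussian mechanism `M(X) = f(X) + N(0, σ²I_k)` for a function `f` with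
L₂-sensitivity at most `Δ₂ > 0` is `(ε, δ)`-DP whenever
`δ ≥ Φ(Δ₂/(2σ) − εσ/Δ₂) − e^ε Φ(−Δ₂/(2σ) − εσ/Δ₂)`:
for all neighbouring datasets `X, X'` and measurable `S ⊆ ℝ^k`,
`P(M(X) ∈ S) ≤ e^ε P(M(X') ∈ S) + δ`. -/
theorem gaussian_mechanism_is_DP
    {𝒳 : Type*} {n k : ℕ}
    (f : (Fin n → 𝒳) → EuclideanSpace ℝ (Fin k))
    (Δ σ ε δ : ℝ) (hΔ : 0 < Δ) (hσ : 0 < σ) (hε : 0 ≤ ε)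
    (hsens : ∀ X X' : Fin n → 𝒳, (∃ i₀ : Fin n, ∀ i : Fin n, i ≠ i₀ → X i = X' i) →
      ‖f X - f X'‖ ≤ Δ)
    (hδ : stdGaussianCDF (Δ / (2 * σ) - ε * σ / Δ)
        - Real.exp ε * stdGaussianCDF (-Δ / (2 * σ) - ε * σ / Δ) ≤ δ)
    (X X' : Fin n → 𝒳) (hneighbour : ∃ i₀ : Fin n, ∀ i : Fin n, i ≠ i₀ → X i = X' i)
    (S : Set (Fin k → ℝ)) (hS : MeasurableSet S) :
    (Measure.pi fun i : Fin k => gaussianReal (f X i) (Real.toNNReal (σ ^ 2))) S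
      ≤ ENNReal.ofReal (Real.exp ε)
          * (Measure.pi fun i : Fin k => gaussianReal (f X' i) (Real.toNNReal (σ ^ 2))) S
        + ENNReal.ofReal δ :=
  gaussian_mechanism_is_DP_general f Δ σ ε δ hσ hε hsens hδ X X' hneighbour S hS
end

section
/- Let μ, μ' ∈ ℝ with Δ = |μ − μ'| > 0, let σ > 0 and ε ≥ 0, and let γ_μ, γ_{μ'} denote the Gaussian distributions N(μ, σ²) and N(μ', σ²) on ℝ. Then sup over measurable sets S ⊆ ℝ of γ_μ(S) − e^ε γ_{μ'}(S) equals Φ(Δ/(2σ) − εσ/Δ) − e^ε Φ(−Δ/(2σ) − εσ/Δ), where Φ is the cumulative distribution function of the standard Gaussian distribution. -/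
open MeasureTheory ProbabilityTheory

open Real

/-!
The supremum of `γ_μ(S) - e^ε γ_{μ'}(S) = ∫_S (p_μ - e^ε p_{μ'})` is attained at the set where
the integrand is positive (Neyman–Pearson). Since `log (p_μ / p_{μ'})` is affine in `x`, that set is
the half-line beyond the threshold `t = (μ + μ') / 2 + σ² ε / (μ - μ')`, on the side of `μ`;
standardizing `t` under both Gaussians gives the two arguments of `Φ`.
-/

lemma toNNReal_sq_ne_zero {σ : ℝ} (hσ : σ ≠ 0) : (σ ^ 2).toNNReal ≠ 0 := by
  simpa using hσ

lemma gaussianReal_map_standardize (m : ℝ) {σ : ℝ} (hσ : σ ≠ 0) :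
    (gaussianReal m (σ ^ 2).toNNReal).map (fun x => (x - m) / σ) = gaussianReal 0 1 := by
  rw [show (fun x => (x - m) / σ) = (· / σ) ∘ (· - m) from rfl,
    ← Measure.map_map (by fun_prop) (by fun_prop), gaussianReal_map_sub_const,
    gaussianReal_map_div_const, sub_self, zero_div]
  congr
  ext
  simp [sq_nonneg, hσ]

lemma gaussianReal_Iic_toReal (m : ℝ) {σ : ℝ} (hσ : 0 < σ) (z : ℝ) :
    (gaussianReal m (σ ^ 2).toNNReal (Set.Iic z)).toReal = stdGaussianCDF ((z - m) / σ) := by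
  have hpre : (fun x => (x - m) / σ) ⁻¹' Set.Iic ((z - m) / σ) = Set.Iic z := by
    ext x
    simp [div_le_div_iff_of_pos_right hσ]
  rw [stdGaussianCDF, ← gaussianReal_map_standardize m hσ.ne',
    Measure.map_apply (by fun_prop) measurableSet_Iic, hpre]

lemma stdGaussianCDF_neg (s : ℝ) : stdGaussianCDF (-s) = 1 - stdGaussianCDF s := by
  have := nullSingletonClass_gaussianReal (μ := 0) one_ne_zero
  have hsymm : gaussianReal 0 1 (Set.Iic (-s)) = gaussianReal 0 1 (Set.Ici s) := by
    have hpre : (fun x : ℝ => -x) ⁻¹' Set.Iic (-s) = Set.Ici s := by ext; simp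
    rw [← hpre, ← Measure.map_apply (by fun_prop) measurableSet_Iic, gaussianReal_map_neg, neg_zero]
  rw [stdGaussianCDF, stdGaussianCDF, hsymm, ← Set.compl_Iio,
    prob_compl_eq_one_sub measurableSet_Iio, measure_congr Iio_ae_eq_Iic,
    ENNReal.toReal_sub_of_le prob_le_one ENNReal.one_ne_top, ENNReal.toReal_one]

lemma gaussianReal_Iio_toReal (m : ℝ) {σ : ℝ} (hσ : 0 < σ) (z : ℝ) :
    (gaussianReal m (σ ^ 2).toNNReal (Set.Iio z)).toReal = stdGaussianCDF ((z - m) / σ) := by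
  have := nullSingletonClass_gaussianReal (μ := m) (toNNReal_sq_ne_zero hσ.ne')
  rw [measure_congr Iio_ae_eq_Iic, gaussianReal_Iic_toReal m hσ]

lemma gaussianReal_Ioi_toReal (m : ℝ) {σ : ℝ} (hσ : 0 < σ) (z : ℝ) :
    (gaussianReal m (σ ^ 2).toNNReal (Set.Ioi z)).toReal = stdGaussianCDF ((m - z) / σ) := by
  rw [← Set.compl_Iic, prob_compl_eq_one_sub measurableSet_Iic,
    ENNReal.toReal_sub_of_le prob_le_one ENNReal.one_ne_top, ENNReal.toReal_one,
    gaussianReal_Iic_toReal m hσ, ← stdGaussianCDF_neg, ← neg_div, neg_sub]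

lemma setIntegral_le_setIntegral_setOf_pos {α : Type*} [MeasurableSpace α] {ν : Measure α}
    {g : α → ℝ} (hg : Integrable g ν) (hgm : Measurable g) {S : Set α} (hS : MeasurableSet S) :
    ∫ x in S, g x ∂ν ≤ ∫ x in {x | 0 < g x}, g x ∂ν := by
  have hT : MeasurableSet {x | 0 < g x} := measurableSet_lt measurable_const hgm
  calc ∫ x in S, g x ∂ν
      = (∫ x in S ∩ {x | 0 < g x}, g x ∂ν) + ∫ x in S \ {x | 0 < g x}, g x ∂ν :=
        (integral_inter_add_sdiff hT hg.integrableOn).symm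
    _ ≤ (∫ x in {x | 0 < g x}, g x ∂ν) + 0 :=
        add_le_add
          (setIntegral_mono_set hg.integrableOn ((ae_restrict_mem hT).mono fun _ hx => hx.le)
            Set.inter_subset_right.eventuallyLE)
          (setIntegral_nonpos (hS.diff hT) fun _ hx => not_lt.mp hx.2)
    _ = ∫ x in {x | 0 < g x}, g x ∂ν := add_zero _

theorem iSup_setIntegral_eq_setIntegral_setOf_pos {α : Type*} [MeasurableSpace α]
    {ν : Measure α} {g : α → ℝ} (hg : Integrable g ν) (hgm : Measurable g) :
    ⨆ S : {S : Set α // MeasurableSet S}, ∫ x in S.1, g x ∂ν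
      = ∫ x in {x | 0 < g x}, g x ∂ν := by
  have hle (S : {S : Set α // MeasurableSet S}) :=
    setIntegral_le_setIntegral_setOf_pos hg hgm S.2
  exact le_antisymm (ciSup_le hle)
    (le_ciSup ⟨_, Set.forall_mem_range.2 hle⟩ ⟨_, measurableSet_lt measurable_const hgm⟩)

lemma gaussianReal_toReal_sub_mul_eq_setIntegral (m m' : ℝ) {v : NNReal} (hv : v ≠ 0) (c : ℝ)
    {S : Set ℝ} (hS : MeasurableSet S) :
    (gaussianReal m v S).toReal - c * (gaussianReal m' v S).toReal
      = ∫ x in S, gaussianPDFReal m v x - c * gaussianPDFReal m' v x := by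
  rw [gaussianReal_apply_eq_integral m hv S, gaussianReal_apply_eq_integral m' hv S,
    ENNReal.toReal_ofReal (setIntegral_nonneg hS fun _ _ => gaussianPDFReal_nonneg _ _ _),
    ENNReal.toReal_ofReal (setIntegral_nonneg hS fun _ _ => gaussianPDFReal_nonneg _ _ _),
    ← integral_const_mul, integral_sub (integrable_gaussianPDFReal m v).integrableOn
      ((integrable_gaussianPDFReal m' v).const_mul c).integrableOn]

lemma gaussianPDFReal_sub_exp_mul_pos_iff {m m' : ℝ} (hm : m ≠ m') {v : NNReal} (hv : v ≠ 0)
    (ε x : ℝ) :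
    0 < gaussianPDFReal m v x - exp ε * gaussianPDFReal m' v x
      ↔ 0 < (m - m') * (x - ((m + m') / 2 + v * ε / (m - m'))) := by
  have hv' : (0 : ℝ) < v := by positivity
  have hd : m - m' ≠ 0 := sub_ne_zero.mpr hm
  rw [sub_pos, gaussianPDFReal, gaussianPDFReal, mul_left_comm, ← exp_add,
    mul_lt_mul_iff_right₀ (by positivity), exp_lt_exp, ← sub_pos]
  have hlog : -(x - m) ^ 2 / (2 * v) - (ε + -(x - m') ^ 2 / (2 * v))
      = (m - m') * (x - ((m + m') / 2 + v * ε / (m - m'))) / v := by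
    field_simp
    ring
  rw [hlog, div_pos_iff_of_pos_right hv']

lemma setOf_gaussianPDFReal_sub_exp_mul_pos_of_lt {m m' : ℝ} (hm : m' < m) {v : NNReal}
    (hv : v ≠ 0) (ε : ℝ) :
    {x | 0 < gaussianPDFReal m v x - exp ε * gaussianPDFReal m' v x}
      = Set.Ioi ((m + m') / 2 + v * ε / (m - m')) := by
  ext x
  rw [Set.mem_ofPred_eq, gaussianPDFReal_sub_exp_mul_pos_iff hm.ne' hv ε x,
    mul_pos_iff_of_pos_left (sub_pos.mpr hm), sub_pos, Set.mem_Ioi]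

lemma setOf_gaussianPDFReal_sub_exp_mul_pos_of_gt {m m' : ℝ} (hm : m < m') {v : NNReal}
    (hv : v ≠ 0) (ε : ℝ) :
    {x | 0 < gaussianPDFReal m v x - exp ε * gaussianPDFReal m' v x}
      = Set.Iio ((m + m') / 2 + v * ε / (m - m')) := by
  ext x
  rw [Set.mem_ofPred_eq, gaussianPDFReal_sub_exp_mul_pos_iff hm.ne hv ε x, Set.mem_Iio]
  exact ⟨fun h => sub_neg.mp (neg_of_mul_pos_right h (sub_neg.mpr hm).le),
    fun h => mul_pos_of_neg_of_neg (sub_neg.mpr hm) (sub_neg.mpr h)⟩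

theorem gaussian_tight_delta_general
    (μ μ' σ ε Δ : ℝ) (hσ : 0 < σ)
    (hΔ : Δ = |μ - μ'|) (hΔpos : 0 < Δ) :
    (⨆ S : {S : Set ℝ // MeasurableSet S},
        ((gaussianReal μ (Real.toNNReal (σ ^ 2))) S.1).toReal
          - Real.exp ε * ((gaussianReal μ' (Real.toNNReal (σ ^ 2))) S.1).toReal)
      = stdGaussianCDF (Δ / (2 * σ) - ε * σ / Δ)
        - Real.exp ε * stdGaussianCDF (-Δ / (2 * σ) - ε * σ / Δ) := by
  have hv := toNNReal_sq_ne_zero hσ.ne'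
  have hg : Integrable fun x => gaussianPDFReal μ (σ ^ 2).toNNReal x
      - exp ε * gaussianPDFReal μ' (σ ^ 2).toNNReal x :=
    (integrable_gaussianPDFReal _ _).sub ((integrable_gaussianPDFReal _ _).const_mul _)
  have hgm : Measurable fun x => gaussianPDFReal μ (σ ^ 2).toNNReal x
      - exp ε * gaussianPDFReal μ' (σ ^ 2).toNNReal x := by
    fun_prop
  rw [iSup_congr fun S => gaussianReal_toReal_sub_mul_eq_setIntegral μ μ' hv _ S.2,
    iSup_setIntegral_eq_setIntegral_setOf_pos hg hgm,
    ← gaussianReal_toReal_sub_mul_eq_setIntegral μ μ' hv _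
      (measurableSet_lt measurable_const hgm)]
  have hvσ : ((σ ^ 2).toNNReal : ℝ) = σ ^ 2 := Real.coe_toNNReal _ (sq_nonneg σ)
  have hμ : μ - μ' ≠ 0 := abs_pos.mp (hΔ ▸ hΔpos)
  rcases hμ.lt_or_gt with h | h
  · rw [setOf_gaussianPDFReal_sub_exp_mul_pos_of_gt (sub_neg.mp h) hv,
      gaussianReal_Iio_toReal μ hσ, gaussianReal_Iio_toReal μ' hσ, hvσ, hΔ, abs_of_neg h]
    congr 3 <;> field_simp <;> ring
  · rw [setOf_gaussianPDFReal_sub_exp_mul_pos_of_lt (sub_pos.mp h) hv,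
      gaussianReal_Ioi_toReal μ hσ, gaussianReal_Ioi_toReal μ' hσ, hvσ, hΔ, abs_of_pos h]
    congr 3 <;> field_simp <;> ring

/-- For two one-dimensional Gaussians `N(μ, σ²)` and `N(μ', σ²)` with
`Δ = |μ − μ'| > 0`, the supremum over measurable sets `S ⊆ ℝ` of
`γ_μ(S) − e^ε γ_{μ'}(S)` equals `Φ(Δ/(2σ) − εσ/Δ) − e^ε Φ(−Δ/(2σ) − εσ/Δ)`. -/
theorem gaussian_tight_delta
    (μ μ' σ ε Δ : ℝ) (hσ : 0 < σ) (hε : 0 ≤ ε)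
    (hΔ : Δ = |μ - μ'|) (hΔpos : 0 < Δ) :
    (⨆ S : {S : Set ℝ // MeasurableSet S},
        ((gaussianReal μ (Real.toNNReal (σ ^ 2))) S.1).toReal
          - Real.exp ε * ((gaussianReal μ' (Real.toNNReal (σ ^ 2))) S.1).toReal)
      = stdGaussianCDF (Δ / (2 * σ) - ε * σ / Δ)
        - Real.exp ε * stdGaussianCDF (-Δ / (2 * σ) - ε * σ / Δ) :=
  gaussian_tight_delta_general μ μ' σ ε Δ hσ hΔ hΔpos
end

section
/- Let V be a finite index set, let 𝒳 = ∏_{i∈V} 𝒳_i be a finite product space, let P: 𝒳 → ℝ be strictly positive, and fix a reference assignment x* ∈ 𝒳. For D ⊆ V define the canonical factor φ*_D(x) = exp(∑_{U⊆D} (−1)^{|D−U|} ln P(x_U, x*_{−U})), where (x_U, x*_{−U}) denotes the element of 𝒳 agreeing with x on coordinates in U and with x* elsewhere. Then for every x ∈ 𝒳, P(x) = P(x*) · ∏_{∅ ≠ D ⊆ V} φ*_D(x). -/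
open scoped BigOperators

lemma real_sum_powerset_neg_one_pow_card {α : Type*} [DecidableEq α] {x : Finset α} :
    (∑ m ∈ x.powerset, (-1 : ℝ) ^ m.card) = if x = ∅ then 1 else 0 := by
  have := @Finset.sum_powerset_neg_one_pow_card α _ x
  have h : ((∑ m ∈ x.powerset, (-1 : ℤ) ^ m.card : ℤ) : ℝ)
      = ∑ m ∈ x.powerset, (-1 : ℝ) ^ m.card := by push_cast; ring_nf
  rw [← h, this]
  split <;> simp

/-- Canonical parametrisation over all subsets. Let `𝒳 = ∏_{i ∈ V} 𝒳ᵢ` be a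
finite product space, `P : 𝒳 → ℝ` strictly positive, and `x* ∈ 𝒳` a reference assignment.
With the canonical factors
`φ*_D(x) = exp(∑_{U ⊆ D} (−1)^{|D − U|} ln P(x_U, x*_{−U}))`, for every `x ∈ 𝒳`,
`P(x) = P(x*) · ∏_{∅ ≠ D ⊆ V} φ*_D(x)`. -/
theorem canonical_factorization_all_subsets
    {V : Type*} [Fintype V] [DecidableEq V]
    {𝒳 : V → Type*} [∀ i, Fintype (𝒳 i)]
    (P : (∀ i, 𝒳 i) → ℝ) (hP : ∀ x, 0 < P x)
    (xstar : ∀ i, 𝒳 i) (x : ∀ i, 𝒳 i) :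
    P x = P xstar *
      ∏ D ∈ (Finset.univ : Finset V).powerset.erase ∅,
        Real.exp (∑ U ∈ D.powerset,
          (-1 : ℝ) ^ (D \ U).card
            * Real.log (P fun i => if i ∈ U then x i else xstar i)) := by
  classical
  set f : Finset V → ℝ :=
    fun U => Real.log (P fun i => if i ∈ U then x i else xstar i) with hf
  -- key Möbius identity over all subsets
  have key : ∑ D ∈ (Finset.univ : Finset V).powerset,
      ∑ U ∈ D.powerset, (-1 : ℝ) ^ (D \ U).card * f U = f Finset.univ := by
    rw [Finset.sum_comm'
      (s' := fun U => (Finset.univ : Finset V).powerset.filter (fun D => U ⊆ D))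
      (t' := (Finset.univ : Finset V).powerset)
      (fun D U => by simp [Finset.mem_powerset, Finset.mem_filter])]
    have inner : ∀ U ∈ (Finset.univ : Finset V).powerset,
        ∑ D ∈ (Finset.univ : Finset V).powerset.filter (fun D => U ⊆ D),
          (-1 : ℝ) ^ (D \ U).card * f U
        = (if (Finset.univ : Finset V) \ U = ∅ then (1:ℝ) else 0) * f U := by
      intro U _
      rw [← Finset.sum_mul, ← real_sum_powerset_neg_one_pow_card]
      congr 1
      refine Finset.sum_nbij' (fun D => D \ U) (fun E => E ∪ U) ?_ ?_ ?_ ?_ ?_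
      · intro D hD
        simp only [Finset.mem_filter, Finset.mem_powerset] at hD ⊢
        exact Finset.sdiff_subset_sdiff hD.1 (le_refl _)
      · intro E hE
        simp only [Finset.mem_powerset, Finset.mem_filter] at hE ⊢
        exact ⟨Finset.subset_univ _, Finset.subset_union_right⟩
      · intro D hD
        simp only [Finset.mem_filter, Finset.mem_powerset] at hD
        exact Finset.sdiff_union_of_subset hD.2
      · intro E hE
        simp only [Finset.mem_powerset, Finset.subset_sdiff] at hE
        exact Finset.union_sdiff_cancel_right hE.2
      · intro D hD; rfl
    rw [Finset.sum_congr rfl inner]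
    have congr2 : ∀ U ∈ (Finset.univ : Finset V).powerset,
        (if (Finset.univ : Finset V) \ U = ∅ then (1:ℝ) else 0) * f U
        = if U = Finset.univ then f U else 0 := by
      intro U _
      by_cases h : U = Finset.univ
      · simp [h]
      · have h2 : ¬ ((Finset.univ : Finset V) \ U = ∅) := by
          simpa [Finset.sdiff_eq_empty_iff_subset, Finset.univ_subset_iff] using h
        simp [h, h2]
    rw [Finset.sum_congr rfl congr2, Finset.sum_ite_eq']
    simp
  -- value of the factor at D = ∅
  have hempty : ∑ U ∈ (∅ : Finset V).powerset,
      (-1 : ℝ) ^ ((∅ : Finset V) \ U).card * f U = f ∅ := by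
    simp
  -- split off the ∅ term
  have hsplit := Finset.add_sum_erase (Finset.univ : Finset V).powerset
    (fun D => ∑ U ∈ D.powerset, (-1 : ℝ) ^ (D \ U).card * f U)
    (by simp : (∅ : Finset V) ∈ (Finset.univ : Finset V).powerset)
  rw [key, hempty] at hsplit
  have hS : ∑ D ∈ (Finset.univ : Finset V).powerset.erase ∅,
      ∑ U ∈ D.powerset, (-1 : ℝ) ^ (D \ U).card * f U
      = f Finset.univ - f ∅ := by linarith
  show P x = P xstar *
      ∏ D ∈ (Finset.univ : Finset V).powerset.erase ∅,
        Real.exp (∑ U ∈ D.powerset, (-1 : ℝ) ^ (D \ U).card * f U)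
  rw [← Real.exp_sum, hS]
  have hfu : f Finset.univ = Real.log (P x) := by
    simp only [hf]
    congr 2
    exact funext fun i => if_pos (Finset.mem_univ i)
  have hfe : f ∅ = Real.log (P xstar) := by
    simp [hf]
  rw [hfu, hfe, Real.exp_sub, Real.exp_log (hP x), Real.exp_log (hP xstar)]
  rw [mul_comm (P xstar), div_mul_cancel₀ _ (hP xstar).ne']
end

section
/- Let V be a finite index set, 𝒳 = ∏_{i∈V} 𝒳_i a finite product space, and let P: 𝒳 → ℝ be strictly positive and factorize over a set of scopes S: P(x) = (1/Z) ∏_{I∈S} φ_I(x_I) with each factor φ_I strictly positive and Z > 0. Fix x* ∈ 𝒳 and define φ*_D(x) = exp(∑_{U⊆D} (−1)^{|D−U|} ln P(x_U, x*_{−U})). Then for every nonempty D ⊆ V that is not a subset of any scope I ∈ S, the canonical factor φ*_D is identically equal to 1. -/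
/-! The alternating sum `∑_{U ⊆ D} (-1)^|D \ U| F U` vanishes as soon as `F` ignores one
coordinate `j ∈ D`, since the terms for `U` and `insert j U` cancel. By the factorization,
`ln P` is a constant plus a sum of `ln φ_I`, and when `D ⊄ I` the summand `ln φ_I` ignores
any coordinate of `D \ I`. -/

namespace Finset

variable {α R : Type*} [DecidableEq α] [CommRing R]

theorem sum_powerset_neg_one_pow_card_sdiff_mul_eq_zero {D : Finset α} {j : α} (hj : j ∈ D)
    {F : Finset α → R} (hF : ∀ U ⊆ D.erase j, F (insert j U) = F U) :
    ∑ U ∈ D.powerset, (-1 : R) ^ (D \ U).card * F U = 0 := by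
  have hjD : j ∉ D.erase j := notMem_erase j D
  rw [← insert_erase hj, sum_powerset_insert hjD, ← sum_add_distrib]
  refine sum_eq_zero fun U hU => ?_
  rw [mem_powerset] at hU
  have hjU : j ∉ U := fun h => hjD (hU h)
  rw [insert_sdiff_insert, sdiff_insert_of_notMem hjD, insert_sdiff_of_notMem _ hjU,
    card_insert_of_notMem (fun h => hjD (mem_sdiff.1 h).1), hF U hU, pow_succ]
  ring

end Finset

theorem canonical_factor_trivial_outside_scopes_general
    {V : Type*} [DecidableEq V]
    {𝒳 : V → Type*}
    (P : (∀ i, 𝒳 i) → ℝ)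
    (S : Finset (Finset V)) (φ : Finset V → (∀ i, 𝒳 i) → ℝ) (Z : ℝ) (hZ : 0 < Z)
    (hφpos : ∀ I ∈ S, ∀ x, 0 < φ I x)
    (hφdep : ∀ I ∈ S, ∀ x y : (∀ i, 𝒳 i), (∀ i ∈ I, x i = y i) → φ I x = φ I y)
    (hfact : ∀ x, P x = (1 / Z) * ∏ I ∈ S, φ I x)
    (xstar : ∀ i, 𝒳 i)
    (D : Finset V) (hD : D.Nonempty) (hDS : ∀ I ∈ S, ¬ D ⊆ I)
    (x : ∀ i, 𝒳 i) :
    Real.exp (∑ U ∈ D.powerset,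
      (-1 : ℝ) ^ (D \ U).card
        * Real.log (P fun i => if i ∈ U then x i else xstar i)) = 1 := by
  have hlog : ∀ y, Real.log (P y) = Real.log (1 / Z) + ∑ I ∈ S, Real.log (φ I y) := fun y => by
    rw [hfact, Real.log_mul (by positivity) (Finset.prod_pos fun I hI => hφpos I hI y).ne',
      Real.log_prod fun I hI => (hφpos I hI y).ne']
  have hscope : ∀ I ∈ S, ∃ k ∈ D, ∀ U : Finset V,
      φ I ((insert k U).piecewise x xstar) = φ I (U.piecewise x xstar) := fun I hI => by
    obtain ⟨k, hkD, hkI⟩ := Finset.not_subset.mp (hDS I hI)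
    refine ⟨k, hkD, fun U => hφdep I hI _ _ fun i hi => ?_⟩
    rw [Finset.piecewise_insert, Function.update_of_ne (ne_of_mem_of_not_mem hi hkI)]
  obtain ⟨j, hj⟩ := hD
  change Real.exp (∑ U ∈ D.powerset,
    (-1 : ℝ) ^ (D \ U).card * Real.log (P (U.piecewise x xstar))) = 1
  simp_rw [Real.exp_eq_one_iff, hlog, mul_add, Finset.mul_sum, Finset.sum_add_distrib]
  rw [Finset.sum_comm, Finset.sum_powerset_neg_one_pow_card_sdiff_mul_eq_zero hj fun _ _ => rfl,
    zero_add]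
  refine Finset.sum_eq_zero fun I hI => ?_
  obtain ⟨k, hkD, hk⟩ := hscope I hI
  exact Finset.sum_powerset_neg_one_pow_card_sdiff_mul_eq_zero hkD fun U _ =>
    congrArg Real.log (hk U)

/-- If a strictly positive `P` factorizes over a set of scopes `S`,
`P(x) = (1/Z) ∏_{I ∈ S} φ_I(x_I)` with strictly positive factors `φ_I` each depending only
on the coordinates in its scope `I`, then for every nonempty `D ⊆ V` that is not a subset
of any scope `I ∈ S`, the canonical factor
`φ*_D(x) = exp(∑_{U ⊆ D} (−1)^{|D − U|} ln P(x_U, x*_{−U}))` is identically 1. -/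
theorem canonical_factor_trivial_outside_scopes
    {V : Type*} [Fintype V] [DecidableEq V]
    {𝒳 : V → Type*} [∀ i, Fintype (𝒳 i)]
    (P : (∀ i, 𝒳 i) → ℝ) (hP : ∀ x, 0 < P x)
    (S : Finset (Finset V)) (φ : Finset V → (∀ i, 𝒳 i) → ℝ) (Z : ℝ) (hZ : 0 < Z)
    (hφpos : ∀ I ∈ S, ∀ x, 0 < φ I x)
    (hφdep : ∀ I ∈ S, ∀ x y : (∀ i, 𝒳 i), (∀ i ∈ I, x i = y i) → φ I x = φ I y)
    (hfact : ∀ x, P x = (1 / Z) * ∏ I ∈ S, φ I x)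
    (xstar : ∀ i, 𝒳 i)
    (D : Finset V) (hD : D.Nonempty) (hDS : ∀ I ∈ S, ¬ D ⊆ I)
    (x : ∀ i, 𝒳 i) :
    Real.exp (∑ U ∈ D.powerset,
      (-1 : ℝ) ^ (D \ U).card
        * Real.log (P fun i => if i ∈ U then x i else xstar i)) = 1 :=
  canonical_factor_trivial_outside_scopes_general P S φ Z hZ hφpos hφdep hfact xstar D hD hDS x
end

section
/- Let V be a finite index set, 𝒳 = ∏_{i∈V} 𝒳_i a finite product space, and let P: 𝒳 → ℝ be a strictly positive probability distribution that factorizes over a set of scopes S: P(x) = (1/Z) ∏_{I∈S} φ_I(x_I) with strictly positive factors. Fix x* ∈ 𝒳 and define the canonical factors φ*_D(x) = exp(∑_{U⊆D} (−1)^{|D−U|} ln P(x_U, x*_{−U})). Let S* = (⋃_{D∈S} 𝒫(D)) ∖ {∅} be the collection of all nonempty subsets of the scopes. Then for every x ∈ 𝒳, P(x) = P(x*) · ∏_{D*∈S*} φ*_{D*}(x_{D*}). -/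
/-!
Write `f U = log P(x_U, x*_{-U})`; the exponent of `φ*_D` is the Möbius transform of `f` on the
Boolean lattice, evaluated at `D`. Möbius inversion over the subsets of `V` gives
`f V - f ∅ = ∑_{D ≠ ∅} (transform of f)(D)`, i.e. `log P(x) - log P(x*)`. By the factorization,
`f` is a constant plus a sum over scopes `I` of functions that depend on `U` only through `U ∩ I`,
and the transform of such a function vanishes at every `D ⊄ I` (pair `U` with `insert j U` for
some `j ∈ D \ I`). Hence only the nonempty `D` lying inside some scope contribute.
-/

open Finset

section Moebius

variable {α R : Type*} [DecidableEq α] [CommRing R]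

def moebiusTransform (f : Finset α → R) (D : Finset α) : R :=
  ∑ U ∈ D.powerset, (-1) ^ #(D \ U) * f U

@[simp]
theorem moebiusTransform_empty (f : Finset α → R) : moebiusTransform f ∅ = f ∅ := by
  simp [moebiusTransform]

theorem moebiusTransform_add (f g : Finset α → R) (D : Finset α) :
    moebiusTransform (fun U => f U + g U) D = moebiusTransform f D + moebiusTransform g D := by
  simp only [moebiusTransform, mul_add, sum_add_distrib]

theorem moebiusTransform_sum {ι : Type*} (s : Finset ι) (f : ι → Finset α → R) (D : Finset α) :
    moebiusTransform (fun U => ∑ i ∈ s, f i U) D = ∑ i ∈ s, moebiusTransform (f i) D := by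
  simp only [moebiusTransform, mul_sum]
  exact sum_comm

theorem moebiusTransform_eq_zero_of_insert_eq {f : Finset α → R} {D : Finset α} {j : α}
    (hj : j ∈ D) (hf : ∀ U, f (insert j U) = f U) : moebiusTransform f D = 0 := by
  have hj' := notMem_erase j D
  rw [moebiusTransform, ← insert_erase hj, sum_powerset_insert hj', ← sum_add_distrib]
  refine sum_eq_zero fun U hU => ?_
  have hjU : j ∉ U := fun h => hj' (mem_powerset.1 hU h)
  rw [insert_sdiff_of_notMem _ hjU, insert_sdiff_insert, sdiff_insert_of_notMem hj', hf,
    card_insert_of_notMem fun h => hj' (mem_sdiff.1 h).1, pow_succ]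
  ring

theorem sum_Icc_neg_one_pow_card_sdiff {U E : Finset α} (hUE : U ⊆ E) :
    ∑ D ∈ Icc U E, (-1 : R) ^ #(D \ U) = if U = E then 1 else 0 := by
  have hinj : Set.InjOn (U ∪ ·) (E \ U).powerset := fun T₁ h₁ T₂ h₂ h => by
    have hd₁ := disjoint_of_subset_left (mem_powerset.1 h₁) sdiff_disjoint
    have hd₂ := disjoint_of_subset_left (mem_powerset.1 h₂) sdiff_disjoint
    simpa [union_sdiff_left, sdiff_eq_self_of_disjoint hd₁, sdiff_eq_self_of_disjoint hd₂]
      using congrArg (· \ U) h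
  rw [Icc_eq_image_powerset hUE, sum_image hinj]
  have hsum := congrArg (Int.cast : ℤ → R) (sum_powerset_neg_one_pow_card (x := E \ U))
  push_cast at hsum
  simp only [sdiff_eq_empty_iff_subset, hUE.ge_iff_eq] at hsum
  rw [← hsum]
  refine sum_congr rfl fun T hT => ?_
  rw [union_sdiff_left, sdiff_eq_self_of_disjoint
    (disjoint_of_subset_left (mem_powerset.1 hT) sdiff_disjoint)]

theorem sum_powerset_moebiusTransform (f : Finset α → R) (E : Finset α) :
    ∑ D ∈ E.powerset, moebiusTransform f D = f E := by
  unfold moebiusTransform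
  rw [sum_comm' (t' := E.powerset) (s' := fun U => Icc U E) fun D U => by
    simp only [mem_powerset, mem_Icc]
    exact ⟨fun h => ⟨⟨h.2, h.1⟩, h.2.trans h.1⟩, fun h => ⟨h.1.2, h.1.1⟩⟩]
  simp_rw [← sum_mul]
  rw [sum_eq_single_of_mem E (mem_powerset_self E)]
  · simp
  · intro U hU hUE
    rw [sum_Icc_neg_one_pow_card_sdiff (mem_powerset.1 hU), if_neg hUE, zero_mul]

theorem moebiusTransform_eq_zero_of_forall_not_subset {S : Finset (Finset α)}
    {g : Finset α → Finset α → R} (c : R) (hg : ∀ I ∈ S, ∀ j ∉ I, ∀ U, g I (insert j U) = g I U)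
    {D : Finset α} (hD : D.Nonempty) (hDS : ∀ I ∈ S, ¬ D ⊆ I) :
    moebiusTransform (fun U => c + ∑ I ∈ S, g I U) D = 0 := by
  obtain ⟨j, hj⟩ := hD
  rw [moebiusTransform_add, moebiusTransform_sum,
    moebiusTransform_eq_zero_of_insert_eq hj fun _ => rfl, zero_add]
  refine sum_eq_zero fun I hI => ?_
  obtain ⟨k, hkD, hkI⟩ := not_subset.1 (hDS I hI)
  exact moebiusTransform_eq_zero_of_insert_eq hkD (hg I hI k hkI)

theorem sum_erase_empty_moebiusTransform [Fintype α] {f : Finset α → R} (T : Finset (Finset α))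
    (hT : ∀ D : Finset α, D.Nonempty → D ∉ T → moebiusTransform f D = 0) :
    ∑ D ∈ T.erase ∅, moebiusTransform f D = f univ - f ∅ := by
  rw [sum_subset (erase_subset_erase ∅ (subset_univ T)) fun D hD hDT => ?_,
    sum_erase_eq_sub (mem_univ _), ← powerset_univ, sum_powerset_moebiusTransform,
    moebiusTransform_empty]
  have hD : D ≠ ∅ := ne_of_mem_erase hD
  exact hT D (nonempty_iff_ne_empty.2 hD) fun h => hDT (mem_erase.2 ⟨hD, h⟩)

end Moebius

theorem canonical_parametrisation_general
    {V : Type*} [Fintype V] [DecidableEq V]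
    {𝒳 : V → Type*}
    (P : (∀ i, 𝒳 i) → ℝ) (hP : ∀ x, 0 < P x)
    (S : Finset (Finset V)) (φ : Finset V → (∀ i, 𝒳 i) → ℝ) (Z : ℝ)
    (hφdep : ∀ I ∈ S, ∀ x y : (∀ i, 𝒳 i), (∀ i ∈ I, x i = y i) → φ I x = φ I y)
    (hfact : ∀ x, P x = (1 / Z) * ∏ I ∈ S, φ I x)
    (xstar : ∀ i, 𝒳 i) (x : ∀ i, 𝒳 i) :
    P x = P xstar *
      ∏ D ∈ (S.biUnion Finset.powerset).erase ∅,
        Real.exp (∑ U ∈ D.powerset,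
          (-1 : ℝ) ^ (D \ U).card
            * Real.log (P fun i => if i ∈ U then x i else xstar i)) := by
  have hlog y : Real.log (P y) = Real.log (1 / Z) + ∑ I ∈ S, Real.log (φ I y) := by
    have h := (hP y).ne'
    rw [hfact] at h ⊢
    rw [Real.log_mul (left_ne_zero_of_mul h) (right_ne_zero_of_mul h),
      Real.log_prod fun I hI => prod_ne_zero_iff.1 (right_ne_zero_of_mul h) I hI]
  set f : Finset V → ℝ := fun U => Real.log (P (U.piecewise x xstar))
  have hvanish (D : Finset V) (hD : D.Nonempty) (hDS : D ∉ S.biUnion powerset) :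
      moebiusTransform f D = 0 := by
    have hf : f = fun U => Real.log (1 / Z) + ∑ I ∈ S, Real.log (φ I (U.piecewise x xstar)) :=
      funext fun U => hlog _
    rw [hf]
    refine moebiusTransform_eq_zero_of_forall_not_subset _ (fun I hI j hj U => ?_) hD
      fun I hI hDI => hDS (mem_biUnion.2 ⟨I, hI, mem_powerset.2 hDI⟩)
    rw [piecewise_insert, hφdep I hI]
    exact fun i hi => Function.update_of_ne (ne_of_mem_of_not_mem hi hj) _ _
  have hsum := sum_erase_empty_moebiusTransform _ hvanish
  rw [← Real.exp_sum]
  change P x = P xstar * Real.exp (∑ D ∈ (S.biUnion powerset).erase ∅, moebiusTransform f D)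
  rw [hsum, Real.exp_sub]
  simp only [f, piecewise_univ, piecewise_empty, Real.exp_log (hP _)]
  exact (mul_div_cancel₀ _ (hP xstar).ne').symm

/-- Canonical parametrisation theorem. If a strictly positive probability
distribution `P` on the finite product space `𝒳 = ∏_{i ∈ V} 𝒳ᵢ` factorizes over scopes `S`,
`P(x) = (1/Z) ∏_{I ∈ S} φ_I(x_I)` with strictly positive factors, then with
`S* = (⋃_{I ∈ S} 𝒫(I)) ∖ {∅}` (all nonempty subsets of the scopes) and canonical factors
`φ*_D(x) = exp(∑_{U ⊆ D} (−1)^{|D − U|} ln P(x_U, x*_{−U}))`, for every `x ∈ 𝒳`,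
`P(x) = P(x*) · ∏_{D ∈ S*} φ*_D(x)`. -/
theorem canonical_parametrisation
    {V : Type*} [Fintype V] [DecidableEq V]
    {𝒳 : V → Type*} [∀ i, Fintype (𝒳 i)]
    (P : (∀ i, 𝒳 i) → ℝ) (hP : ∀ x, 0 < P x)
    (hprob : ∑ x : (∀ i, 𝒳 i), P x = 1)
    (S : Finset (Finset V)) (φ : Finset V → (∀ i, 𝒳 i) → ℝ) (Z : ℝ) (hZ : 0 < Z)
    (hφpos : ∀ I ∈ S, ∀ x, 0 < φ I x)
    (hφdep : ∀ I ∈ S, ∀ x y : (∀ i, 𝒳 i), (∀ i ∈ I, x i = y i) → φ I x = φ I y)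
    (hfact : ∀ x, P x = (1 / Z) * ∏ I ∈ S, φ I x)
    (xstar : ∀ i, 𝒳 i) (x : ∀ i, 𝒳 i) :
    P x = P xstar *
      ∏ D ∈ (S.biUnion Finset.powerset).erase ∅,
        Real.exp (∑ U ∈ D.powerset,
          (-1 : ℝ) ^ (D \ U).card
            * Real.log (P fun i => if i ∈ U then x i else xstar i)) :=
  canonical_parametrisation_general P hP S φ Z hφdep hfact xstar x
end
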